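/- Let A be a Δ-separable Frobenius algebra in a monoidal category, and suppose the idempotent π on X ⊗ Y (given by acting with Δ∘η on the right of X and the left of Y) splits as π = ι ∘ ϑ with ϑ ∘ ι = id. Then the splitting object is a coequalizer of the two canonical morphisms ρ_X ⊗ id_Y and id_X ⊗ λ_Y from X ⊗ A ⊗ Y to X ⊗ Y; in particular it computes the relative tensor product X ⊗_A Y. -/

import Mathlib

/-!
Write `f = ρX ▷ Y` and `g = X ◁ lY` for the two actions `X ⊗ (A ⊗ Y) ⟶ X ⊗ Y`, and
`u = X ◁ unitComulAction`. By Δ-separability `u` is a section of `g`, and `u ≫ f = π`. The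
Frobenius relations `Δ(a) = Δ(1) a = a Δ(1)` show that `f ≫ π` and `g ≫ π` are both
`comulAction`. So with `π = ϑ ≫ ι`, the pair `(ι, u)` exhibits `ϑ` as a split coequalizer of
`f` and `g`.
-/

open CategoryTheory MonoidalCategory Limits

/-- The canonical morphism `π : X ⊗ Y ⟶ X ⊗ Y` obtained by inserting `Δ ∘ η` in the middle
and acting with its two outputs on `X` (from the right) and `Y` (from the left). -/
noncomputable def canonicalPi {C : Type*} [Category C] [MonoidalCategory C]
    {A X Y : C} (η : 𝟙_ C ⟶ A) (Δ : A ⟶ A ⊗ A)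
    (ρX : X ⊗ A ⟶ X) (lY : A ⊗ Y ⟶ Y) : X ⊗ Y ⟶ X ⊗ Y :=
  (X ◁ (λ_ Y).inv) ≫ (X ◁ ((η ≫ Δ) ▷ Y)) ≫ (X ◁ (α_ A A Y).hom) ≫
    (X ◁ (A ◁ lY)) ≫ (α_ X A Y).inv ≫ (ρX ▷ Y)

namespace CategoryTheory.Limits.IsSplitCoequalizer

variable {C : Type*} [Category C] {P Q Z : C} {f g : P ⟶ Q}

def ofSplitIdempotent (u : Q ⟶ P) (ι : Z ⟶ Q) (ϑ : Q ⟶ Z) (hu : u ≫ g = 𝟙 Q)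
    (hcond : f ≫ u ≫ f = g ≫ u ≫ f) (hsplit : ϑ ≫ ι = u ≫ f) (hretr : ι ≫ ϑ = 𝟙 Z) :
    IsSplitCoequalizer f g ϑ where
  rightSection := ι
  leftSection := u
  condition := by
    have hϑ : u ≫ f ≫ ϑ = ϑ := by
      rw [← Category.assoc, ← hsplit, Category.assoc, hretr, Category.comp_id]
    rw [← hϑ, reassoc_of% hcond]
  rightSection_π := hretr
  leftSection_bottom := hu
  leftSection_top := hsplit.symm

end CategoryTheory.Limits.IsSplitCoequalizer

section Frobenius

variable {C : Type*} [Category C] [MonoidalCategory C] {A X Y : C}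
  (μ : A ⊗ A ⟶ A) (η : 𝟙_ C ⟶ A) (Δ : A ⟶ A ⊗ A) (ρX : X ⊗ A ⟶ X) (lY : A ⊗ Y ⟶ Y)

lemma comul_unit_mul_eq_comul (hunitl : (λ_ A).inv ≫ (η ▷ A) ≫ μ = 𝟙 A)
    (hfrob1 : (Δ ▷ A) ≫ (α_ A A A).hom ≫ (A ◁ μ) = μ ≫ Δ) :
    (λ_ A).inv ≫ ((η ≫ Δ) ▷ A) ≫ (α_ A A A).hom ≫ (A ◁ μ) = Δ := by
  rw [comp_whiskerRight, Category.assoc, hfrob1, reassoc_of% hunitl]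

lemma mul_comul_unit_eq_comul (hunitr : (ρ_ A).inv ≫ (A ◁ η) ≫ μ = 𝟙 A)
    (hfrob2 : (A ◁ Δ) ≫ (α_ A A A).inv ≫ (μ ▷ A) = μ ≫ Δ) :
    (ρ_ A).inv ≫ (A ◁ (η ≫ Δ)) ≫ (α_ A A A).inv ≫ (μ ▷ A) = Δ := by
  rw [MonoidalCategory.whiskerLeft_comp, Category.assoc, hfrob2, reassoc_of% hunitr]

/-- `y ↦ Δ(1)₁ ⊗ Δ(1)₂ • y`. -/
noncomputable def unitComulAction : Y ⟶ A ⊗ Y :=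
  (λ_ Y).inv ≫ ((η ≫ Δ) ▷ Y) ≫ (α_ A A Y).hom ≫ (A ◁ lY)

/-- `x ⊗ a ⊗ y ↦ x Δ(a)₁ ⊗ Δ(a)₂ y`. -/
noncomputable def comulAction : X ⊗ (A ⊗ Y) ⟶ X ⊗ Y :=
  (X ◁ ((Δ ▷ Y) ≫ (α_ A A Y).hom ≫ (A ◁ lY))) ≫ (α_ X A Y).inv ≫ (ρX ▷ Y)

lemma canonicalPi_eq :
    canonicalPi η Δ ρX lY = (X ◁ unitComulAction η Δ lY) ≫ (α_ X A Y).inv ≫ (ρX ▷ Y) := by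
  simp only [canonicalPi, unitComulAction, MonoidalCategory.whiskerLeft_comp, Category.assoc]

lemma unitComulAction_comp_action (hsep : Δ ≫ μ = 𝟙 A)
    (hYassoc : (α_ A A Y).inv ≫ (μ ▷ Y) ≫ lY = (A ◁ lY) ≫ lY)
    (hYunit : (λ_ Y).inv ≫ (η ▷ Y) ≫ lY = 𝟙 Y) :
    unitComulAction η Δ lY ≫ lY = 𝟙 Y := by
  rw [unitComulAction, Category.assoc, Category.assoc, Category.assoc, ← hYassoc,
    Iso.hom_inv_id_assoc, ← comp_whiskerRight_assoc, Category.assoc, hsep, Category.comp_id,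
    hYunit]

lemma whiskerLeft_action_comp_canonicalPi (hunitl : (λ_ A).inv ≫ (η ▷ A) ≫ μ = 𝟙 A)
    (hfrob1 : (Δ ▷ A) ≫ (α_ A A A).hom ≫ (A ◁ μ) = μ ≫ Δ)
    (hYassoc : (α_ A A Y).inv ≫ (μ ▷ Y) ≫ lY = (A ◁ lY) ≫ lY) :
    (X ◁ lY) ≫ canonicalPi η Δ ρX lY = comulAction Δ ρX lY := by
  have key : lY ≫ unitComulAction η Δ lY = (Δ ▷ Y) ≫ (α_ A A Y).hom ≫ (A ◁ lY) := by
    conv_rhs => rw [← comul_unit_mul_eq_comul μ η Δ hunitl hfrob1]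
    rw [unitComulAction, leftUnitor_inv_naturality_assoc, whisker_exchange_assoc,
      associator_naturality_right_assoc, ← MonoidalCategory.whiskerLeft_comp,
      ← hYassoc]
    monoidal
  rw [canonicalPi_eq, ← MonoidalCategory.whiskerLeft_comp_assoc, key, comulAction]

lemma rightAction_comp_canonicalPi (hunitr : (ρ_ A).inv ≫ (A ◁ η) ≫ μ = 𝟙 A)
    (hfrob2 : (A ◁ Δ) ≫ (α_ A A A).inv ≫ (μ ▷ A) = μ ≫ Δ)
    (hXassoc : (α_ X A A).hom ≫ (X ◁ μ) ≫ ρX = (ρX ▷ A) ≫ ρX) :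
    ((α_ X A Y).inv ≫ (ρX ▷ Y)) ≫ canonicalPi η Δ ρX lY = comulAction Δ ρX lY := by
  rw [canonicalPi_eq, Category.assoc, ← whisker_exchange_assoc,
    associator_inv_naturality_left_assoc, ← comp_whiskerRight, ← hXassoc, unitComulAction,
    comulAction]
  conv_rhs => rw [← mul_comul_unit_eq_comul μ η Δ hunitr hfrob2]
  simp only [comp_whiskerRight, Category.assoc]
  rw [associator_naturality_left_assoc, ← whisker_exchange]
  monoidal

end Frobenius

theorem splitting_isCoequalizer_general {C : Type*} [Category C] [MonoidalCategory C]
    (A X Y : C)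
    (μ : A ⊗ A ⟶ A) (η : 𝟙_ C ⟶ A) (Δ : A ⟶ A ⊗ A)
    (hunitl : (λ_ A).inv ≫ (η ▷ A) ≫ μ = 𝟙 A)
    (hunitr : (ρ_ A).inv ≫ (A ◁ η) ≫ μ = 𝟙 A)
    (hfrob1 : (Δ ▷ A) ≫ (α_ A A A).hom ≫ (A ◁ μ) = μ ≫ Δ)
    (hfrob2 : (A ◁ Δ) ≫ (α_ A A A).inv ≫ (μ ▷ A) = μ ≫ Δ)
    (hsep : Δ ≫ μ = 𝟙 A)
    (ρX : X ⊗ A ⟶ X)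
    (hXassoc : (α_ X A A).hom ≫ (X ◁ μ) ≫ ρX = (ρX ▷ A) ≫ ρX)
    (lY : A ⊗ Y ⟶ Y)
    (hYassoc : (α_ A A Y).inv ≫ (μ ▷ Y) ≫ lY = (A ◁ lY) ≫ lY)
    (hYunit : (λ_ Y).inv ≫ (η ▷ Y) ≫ lY = 𝟙 Y)
    (Z : C) (ι : Z ⟶ X ⊗ Y) (ϑ : X ⊗ Y ⟶ Z)
    (hsplit : ϑ ≫ ι = canonicalPi η Δ ρX lY)
    (hretr : ι ≫ ϑ = 𝟙 Z) :
    ∃ h : ((α_ X A Y).inv ≫ (ρX ▷ Y)) ≫ ϑ = (X ◁ lY) ≫ ϑ,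
      Nonempty (IsColimit (Cofork.ofπ ϑ h)) := by
  have hπ := canonicalPi_eq η Δ ρX lY
  have hsection : (X ◁ unitComulAction η Δ lY) ≫ (X ◁ lY) = 𝟙 (X ⊗ Y) := by
    rw [← MonoidalCategory.whiskerLeft_comp,
      unitComulAction_comp_action μ η Δ lY hsep hYassoc hYunit, MonoidalCategory.whiskerLeft_id]
  have hcond : ((α_ X A Y).inv ≫ (ρX ▷ Y)) ≫ canonicalPi η Δ ρX lY =
      (X ◁ lY) ≫ canonicalPi η Δ ρX lY := by
    rw [rightAction_comp_canonicalPi μ η Δ ρX lY hunitr hfrob2 hXassoc,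
      whiskerLeft_action_comp_canonicalPi μ η Δ ρX lY hunitl hfrob1 hYassoc]
  rw [hπ] at hcond
  let t := IsSplitCoequalizer.ofSplitIdempotent _ ι ϑ hsection hcond (hsplit.trans hπ) hretr
  exact ⟨t.condition, ⟨t.isCoequalizer⟩⟩

/-- If the canonical idempotent `π` on `X ⊗ Y` splits as `π = ι ∘ ϑ` with `ϑ ∘ ι = id`,
then the splitting object is a coequalizer of the two canonical morphisms
`X ⊗ A ⊗ Y ⟶ X ⊗ Y` (acting via `ρX` resp. `lY`); i.e. it computes `X ⊗_A Y`. -/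
theorem splitting_isCoequalizer {C : Type*} [Category C] [MonoidalCategory C]
    (A X Y : C)
    (μ : A ⊗ A ⟶ A) (η : 𝟙_ C ⟶ A) (Δ : A ⟶ A ⊗ A) (ε : A ⟶ 𝟙_ C)
    (hassoc : (α_ A A A).hom ≫ (A ◁ μ) ≫ μ = (μ ▷ A) ≫ μ)
    (hunitl : (λ_ A).inv ≫ (η ▷ A) ≫ μ = 𝟙 A)
    (hunitr : (ρ_ A).inv ≫ (A ◁ η) ≫ μ = 𝟙 A)
    (hcoassoc : Δ ≫ (Δ ▷ A) ≫ (α_ A A A).hom = Δ ≫ (A ◁ Δ))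
    (hcounitl : Δ ≫ (ε ▷ A) ≫ (λ_ A).hom = 𝟙 A)
    (hcounitr : Δ ≫ (A ◁ ε) ≫ (ρ_ A).hom = 𝟙 A)
    (hfrob1 : (Δ ▷ A) ≫ (α_ A A A).hom ≫ (A ◁ μ) = μ ≫ Δ)
    (hfrob2 : (A ◁ Δ) ≫ (α_ A A A).inv ≫ (μ ▷ A) = μ ≫ Δ)
    (hsep : Δ ≫ μ = 𝟙 A)
    (ρX : X ⊗ A ⟶ X)
    (hXassoc : (α_ X A A).hom ≫ (X ◁ μ) ≫ ρX = (ρX ▷ A) ≫ ρX)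
    (hXunit : (ρ_ X).inv ≫ (X ◁ η) ≫ ρX = 𝟙 X)
    (lY : A ⊗ Y ⟶ Y)
    (hYassoc : (α_ A A Y).inv ≫ (μ ▷ Y) ≫ lY = (A ◁ lY) ≫ lY)
    (hYunit : (λ_ Y).inv ≫ (η ▷ Y) ≫ lY = 𝟙 Y)
    (Z : C) (ι : Z ⟶ X ⊗ Y) (ϑ : X ⊗ Y ⟶ Z)
    (hsplit : ϑ ≫ ι = canonicalPi η Δ ρX lY)
    (hretr : ι ≫ ϑ = 𝟙 Z) :
    ∃ h : ((α_ X A Y).inv ≫ (ρX ▷ Y)) ≫ ϑ = (X ◁ lY) ≫ ϑ,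
      Nonempty (IsColimit (Cofork.ofπ ϑ h)) :=
  splitting_isCoequalizer_general A X Y μ η Δ hunitl hunitr hfrob1 hfrob2 hsep ρX hXassoc lY hYassoc
    hYunit Z ι ϑ hsplit hretr
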